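/- arXiv:2202.08163 — 2 statements merged into one kernel-verified Lean document; each statement's English description precedes it below -/
import Mathlib

section
/- Let Ω be a Polish space with a Borel probability measure P on its Borel σ-algebra 𝓕, let (E, Σ) be a measurable space, and let 1 ≤ p < ∞. Suppose ρ : E × ℝ → ℝ satisfies: (i) for every e ∈ E the map x ↦ ρ(e, x) is continuous; (ii) for every x ∈ ℝ the map e ↦ ρ(e, x) is measurable; (iii) there is a constant C > 0 with |ρ(e, x)| ≤ C(1 + |x|) for all (e, x) ∈ E × ℝ. Then for any measurable map X : E → L^p(Ω, 𝓕, P) (with L^p carrying the Borel σ-algebra of its norm topology), for each e ∈ E the function ω ↦ ρ(e, X(e)(ω)) belongs to L^p(Ω, 𝓕, P) (where X(e)(·) denotes any representative of the class X(e)), and the resulting map e ↦ [ω ↦ ρ(e, X(e)(ω))] ∈ L^p(Ω, 𝓕, P) is measurable. -/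
/-!
For fixed `e`, the superposition operator `f ↦ ρ(e, f)` is continuous on `Lᵖ`: by Vitali's
theorem, `Lᵖ` convergence is convergence in measure plus uniform integrability; the first is
preserved by the continuous map `ρ(e, ·)`, the second by its linear growth. For fixed `f`, the
distance from `ρ(·, f)` to any `g ∈ Lᵖ` is the `Lᵖ` norm of a jointly measurable function of
`(e, ω)`, so `e ↦ ρ(e, f)` is measurable because `Lᵖ` is separable. Separability also makes the
operator, continuous in `f` and measurable in `e`, jointly measurable; composing with
`e ↦ (X e, e)` gives the claim.
-/

open MeasureTheory ENNReal Filter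

theorem measurable_of_measurable_dist {β X : Type*} [MeasurableSpace β] [PseudoMetricSpace X]
    [SecondCountableTopology X] [MeasurableSpace X] [BorelSpace X] {F : β → X}
    (hF : ∀ x, Measurable fun b => dist (F b) x) : Measurable F := by
  refine measurable_of_isOpen fun U hU => ?_
  let balls : {c : X × ℝ // Metric.ball c.1 c.2 ⊆ U} → Set X := fun c => Metric.ball c.1.1 c.1.2
  obtain ⟨T, hTc, hTU⟩ := TopologicalSpace.isOpen_iUnion_countable balls
    fun _ => Metric.isOpen_ball
  have hU_eq : ⋃ c, balls c = U := by
    refine subset_antisymm (Set.iUnion_subset fun c => c.2) fun x hx => ?_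
    obtain ⟨r, hr, hrU⟩ := Metric.isOpen_iff.1 hU x hx
    exact Set.mem_iUnion.2 ⟨⟨(x, r), hrU⟩, Metric.mem_ball_self hr⟩
  rw [← hU_eq, ← hTU, Set.preimage_iUnion₂]
  exact .biUnion hTc fun c _ => hF c.1.1 measurableSet_Iio

namespace MeasureTheory

section Measurability

variable {α β F : Type*} [MeasurableSpace α] [MeasurableSpace β] {μ : Measure α}
  [NormedAddCommGroup F] {p : ℝ≥0∞}

theorem measurable_eLpNorm_of_stronglyMeasurable_uncurry [SFinite μ] (hp : p ≠ ∞)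
    {G : β → α → F} (hG : StronglyMeasurable (Function.uncurry G)) :
    Measurable fun b => eLpNorm (G b) p μ := by
  rcases eq_or_ne p 0 with rfl | hp0
  · simp
  simp_rw [eLpNorm_eq_lintegral_rpow_enorm_toReal hp0 hp]
  exact ((hG.enorm.pow_const _).lintegral_prod_right').pow_const _

theorem measurable_toLp_of_stronglyMeasurable_uncurry [Fact (1 ≤ p)] [SFinite μ] (hp : p ≠ ∞)
    [MeasurableSpace (Lp F p μ)] [BorelSpace (Lp F p μ)] [SecondCountableTopology (Lp F p μ)]
    {G : β → α → F} (hG : StronglyMeasurable (Function.uncurry G))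
    (hGp : ∀ b, MemLp (G b) p μ) :
    Measurable fun b => (hGp b).toLp (G b) := by
  refine measurable_of_measurable_dist fun g => ?_
  have hdist : ∀ b, dist ((hGp b).toLp (G b)) g = (eLpNorm (G b - (g : α → F)) p μ).toReal :=
    fun b => by
      rw [Lp.dist_def]
      exact congrArg _ (eLpNorm_congr_ae ((hGp b).coeFn_toLp.sub .rfl))
  simp_rw [hdist]
  refine (measurable_eLpNorm_of_stronglyMeasurable_uncurry hp ?_).ennreal_toReal
  exact hG.sub ((Lp.stronglyMeasurable g).comp_measurable measurable_snd)

end Measurability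

section LinearGrowth

variable {α ι E F : Type*} [MeasurableSpace α] {μ : Measure α}
  [NormedAddCommGroup E] [NormedAddCommGroup F] {p : ℝ≥0∞}

theorem MemLp.continuous_comp_of_linearGrowth [IsFiniteMeasure μ] {φ : E → F}
    (hφ : Continuous φ) {C : ℝ} (hφC : ∀ x, ‖φ x‖ ≤ C * (1 + ‖x‖)) {f : α → E}
    (hf : MemLp f p μ) : MemLp (fun a => φ (f a)) p μ := by
  have henv : MemLp (fun a => 1 + ‖f a‖) p μ := (memLp_const (1 : ℝ)).add hf.norm
  refine henv.of_le_mul (c := C) (hφ.comp_aestronglyMeasurable hf.1) (ae_of_all _ fun a => ?_)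
  rw [Real.norm_of_nonneg (by positivity)]
  exact hφC (f a)

theorem UnifIntegrable.of_norm_le_mul {f : ι → α → E} {g : ι → α → F}
    (hf : UnifIntegrable f p μ) {c : ℝ} (hgf : ∀ i a, ‖g i a‖ ≤ c * ‖f i a‖) :
    UnifIntegrable g p μ := by
  intro ε hε
  obtain ⟨δ, hδ, hfδ⟩ := hf (ε := ε / (|c| + 1)) (by positivity)
  refine ⟨δ, hδ, fun i s hs hμs => ?_⟩
  have hind : ∀ a, ‖s.indicator (g i) a‖ ≤ c * ‖s.indicator (f i) a‖ := fun a => by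
    by_cases ha : a ∈ s <;> simp [ha, hgf]
  calc eLpNorm (s.indicator (g i)) p μ
      ≤ ENNReal.ofReal c * eLpNorm (s.indicator (f i)) p μ :=
        eLpNorm_le_mul_eLpNorm_of_ae_le_mul (ae_of_all _ hind) p
    _ ≤ ENNReal.ofReal c * ENNReal.ofReal (ε / (|c| + 1)) := by gcongr; exact hfδ i s hs hμs
    _ ≤ ENNReal.ofReal ε := by
        rw [← ENNReal.ofReal_mul' (by positivity)]
        refine ENNReal.ofReal_le_ofReal ?_
        rw [mul_div_assoc', div_le_iff₀ (by positivity)]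
        nlinarith [le_abs_self c]

theorem UnifIntegrable.comp_of_linearGrowth [IsFiniteMeasure μ] (hp : 1 ≤ p) (hp' : p ≠ ∞)
    {f : ι → α → E} (hf : UnifIntegrable f p μ) (hfm : ∀ i, AEStronglyMeasurable (f i) μ)
    {φ : E → F} {C : ℝ} (hφC : ∀ x, ‖φ x‖ ≤ C * (1 + ‖x‖)) :
    UnifIntegrable (fun i a => φ (f i a)) p μ := by
  have hnorm : UnifIntegrable (fun i a => ‖f i a‖) p μ :=
    hf.of_norm_le_mul (c := 1) fun i a => by simp
  have henv : UnifIntegrable (fun i a => 1 + ‖f i a‖) p μ :=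
    (unifIntegrable_const hp hp' (memLp_const (1 : ℝ))).add hnorm hp
      (fun _ => aestronglyMeasurable_const) fun i => (hfm i).norm
  exact henv.of_norm_le_mul fun i a => by
    rw [Real.norm_of_nonneg (by positivity)]
    exact hφC _

theorem Continuous.comp_tendstoInMeasure [IsFiniteMeasure μ] {φ : E → F} (hφ : Continuous φ)
    {f : ℕ → α → E} {g : α → E} (hf : ∀ n, AEStronglyMeasurable (f n) μ)
    (hfg : TendstoInMeasure μ f atTop g) :
    TendstoInMeasure μ (fun n a => φ (f n a)) atTop (fun a => φ (g a)) := by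
  rw [exists_seq_tendstoInMeasure_atTop_iff fun n => hφ.comp_aestronglyMeasurable (hf n)]
  intro ns hns
  obtain ⟨ns', hns', hae⟩ := (exists_seq_tendstoInMeasure_atTop_iff hf).1 hfg ns hns
  exact ⟨ns', hns', hae.mono fun a ha => (hφ.tendsto _).comp ha⟩

namespace Lp

noncomputable def compOfLinearGrowth [IsFiniteMeasure μ] {φ : E → F} (hφ : Continuous φ)
    {C : ℝ} (hφC : ∀ x, ‖φ x‖ ≤ C * (1 + ‖x‖)) (f : Lp E p μ) : Lp F p μ :=
  ((Lp.memLp f).continuous_comp_of_linearGrowth hφ hφC).toLp fun a => φ (f a)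

theorem continuous_compOfLinearGrowth [IsFiniteMeasure μ] [Fact (1 ≤ p)] (hp : p ≠ ∞)
    {φ : E → F} (hφ : Continuous φ) {C : ℝ} (hφC : ∀ x, ‖φ x‖ ≤ C * (1 + ‖x‖)) :
    Continuous (compOfLinearGrowth hφ hφC : Lp E p μ → Lp F p μ) := by
  have hp1 : 1 ≤ p := Fact.out
  refine continuous_iff_seqContinuous.2 fun u f hu => ?_
  refine (tendsto_Lp_iff_tendsto_eLpNorm'' _
    (fun n => (Lp.memLp (u n)).continuous_comp_of_linearGrowth hφ hφC) _ _).2 ?_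
  refine (tendstoInMeasure_iff_tendsto_Lp_finite hp1 hp
    (fun n => (Lp.memLp (u n)).continuous_comp_of_linearGrowth hφ hφC)
    ((Lp.memLp f).continuous_comp_of_linearGrowth hφ hφC)).1 ⟨?_, ?_⟩
  · exact hφ.comp_tendstoInMeasure (fun n => Lp.aestronglyMeasurable _)
      (tendstoInMeasure_of_tendsto_Lp hu)
  · have hui := unifIntegrable_of_tendsto_Lp hp1 hp (fun n => Lp.memLp _) (Lp.memLp f)
      ((tendsto_Lp_iff_tendsto_eLpNorm' _ _).1 hu)
    exact hui.comp_of_linearGrowth hp1 hp (fun n => Lp.aestronglyMeasurable _) hφC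

end Lp

end LinearGrowth

end MeasureTheory

theorem measurable_comp_Lp_general
    {Ω : Type*} [TopologicalSpace Ω] [PolishSpace Ω] [MeasurableSpace Ω] [BorelSpace Ω]
    (P : Measure Ω) [IsProbabilityMeasure P]
    {E : Type*} [MeasurableSpace E]
    {p : ℝ≥0∞} [Fact (1 ≤ p)] (hp2 : p ≠ ⊤)
    (ρ : E → ℝ → ℝ)
    (hcont : ∀ e : E, Continuous fun x : ℝ => ρ e x)
    (hmeas : ∀ x : ℝ, Measurable fun e : E => ρ e x)
    (C : ℝ)
    (hgrowth : ∀ (e : E) (x : ℝ), |ρ e x| ≤ C * (1 + |x|))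
    (X : E → Lp ℝ p P)
    (hX : @Measurable E (Lp ℝ p P) _ (borel (Lp ℝ p P)) X) :
    ∃ hmem : ∀ e : E, MemLp (fun ω : Ω => ρ e ((X e : Ω → ℝ) ω)) p P,
      @Measurable E (Lp ℝ p P) _ (borel (Lp ℝ p P))
        (fun e : E => (hmem e).toLp (fun ω : Ω => ρ e ((X e : Ω → ℝ) ω))) := by
  borelize ↥(Lp ℝ p P)
  have : Fact (p ≠ ∞) := ⟨hp2⟩
  have hρ : Measurable (Function.uncurry ρ) :=
    (measurable_uncurry_of_continuous_of_measurable (u := fun x e => ρ e x) hcont hmeas).comp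
      measurable_swap
  let Φ : Lp ℝ p P → E → Lp ℝ p P := fun f e => Lp.compOfLinearGrowth (hcont e) (hgrowth e) f
  have hΦ_cont : ∀ e, Continuous fun f => Φ f e := fun e =>
    Lp.continuous_compOfLinearGrowth hp2 (hcont e) (hgrowth e)
  have hΦ_meas : ∀ f, Measurable (Φ f) := fun f =>
    measurable_toLp_of_stronglyMeasurable_uncurry hp2 (G := fun e ω => ρ e (f ω))
      (hρ.comp (measurable_fst.prodMk
        ((Lp.stronglyMeasurable f).measurable.comp measurable_snd))).stronglyMeasurable _
  exact ⟨fun e => (Lp.memLp (X e)).continuous_comp_of_linearGrowth (hcont e) (hgrowth e),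
    (measurable_uncurry_of_continuous_of_measurable hΦ_cont hΦ_meas).comp
      (hX.prodMk measurable_id)⟩

/-- Let `Ω` be a Polish space with a Borel probability measure `P`,
`(E, Σ)` a measurable space, `1 ≤ p < ∞`. Suppose `ρ : E × ℝ → ℝ` is continuous in
the second variable, measurable in the first, and of uniform linear growth. Then for
any Borel-measurable `X : E → L^p(Ω)`, for each `e` the function
`ω ↦ ρ(e, X(e)(ω))` lies in `L^p(Ω)` and the map `e ↦ [ω ↦ ρ(e, X(e)(ω))]` into
`L^p(Ω)` is measurable. -/
theorem measurable_comp_Lp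
    {Ω : Type*} [TopologicalSpace Ω] [PolishSpace Ω] [MeasurableSpace Ω] [BorelSpace Ω]
    (P : Measure Ω) [IsProbabilityMeasure P]
    {E : Type*} [MeasurableSpace E]
    {p : ℝ≥0∞} [Fact (1 ≤ p)] (hp2 : p ≠ ⊤)
    (ρ : E → ℝ → ℝ)
    (hcont : ∀ e : E, Continuous fun x : ℝ => ρ e x)
    (hmeas : ∀ x : ℝ, Measurable fun e : E => ρ e x)
    (C : ℝ) (hC : 0 < C)
    (hgrowth : ∀ (e : E) (x : ℝ), |ρ e x| ≤ C * (1 + |x|))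
    (X : E → Lp ℝ p P)
    (hX : @Measurable E (Lp ℝ p P) _ (borel (Lp ℝ p P)) X) :
    ∃ hmem : ∀ e : E, MemLp (fun ω : Ω => ρ e ((X e : Ω → ℝ) ω)) p P,
      @Measurable E (Lp ℝ p P) _ (borel (Lp ℝ p P))
        (fun e : E => (hmem e).toLp (fun ω : Ω => ρ e ((X e : Ω → ℝ) ω))) :=
  measurable_comp_Lp_general P hp2 ρ hcont hmeas C hgrowth X hX
end

section
/- Let Ω be a Polish space with a Borel probability measure P, let T > 0 and 1 ≤ p < ∞. Suppose ψ : [0,1] × [0,T] × ℝ → ℝ is jointly measurable, x ↦ ψ(λ, t, x) is continuous for each fixed (λ, t), and there is a constant C > 0 with |ψ(λ, t, x)| ≤ C(1 + |x|) for all (λ, t, x). Let X : [0,1] → L^p(Ω; C([0,T]; ℝ)) be a measurable map (where C([0,T];ℝ) carries the supremum norm and L^p the Borel σ-algebra of its norm topology). Then for each λ ∈ [0,1] the function ω ↦ (t ↦ ∫_0^t ψ(λ, s, X(λ)(ω)(s)) ds) defines an element of L^p(Ω; C([0,T]; ℝ)), and the map λ ↦ [ω ↦ (t ↦ ∫_0^t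 ψ(λ, s, X(λ)(ω)(s)) ds)] ∈ L^p(Ω; C([0,T]; ℝ)) is measurable. -/
open MeasureTheory ENNReal

/-!
Write `V_λ g = ∫₀^· ψ(λ, s, g(s)) ds`, so that the map in question is
`λ ↦ V_λ ∘ X(λ)`.
Each `V_λ` is continuous on `C([0,T])` (dominated convergence) and of linear growth, so the
superposition operator `Y ↦ V_λ ∘ Y` is continuous on `Lᵖ` by Vitali's convergence theorem.
For fixed `Y` the map `λ ↦ V_λ ∘ Y` is measurable: its distance to any `Z` is an integral over
`Ω` of a jointly measurable function of `(λ, ω)`. Since `Ω` is Polish, `Lᵖ(Ω; C([0,T]))` is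
second countable, and a function that is continuous in a second-countable metrizable variable and
measurable in the other one is jointly measurable; compose it with `λ ↦ (X(λ), λ)`.
-/

open Set Filter TopologicalSpace Function

theorem measurable_of_measurable_dist_s3 {α β : Type*} [MeasurableSpace α] [PseudoMetricSpace β]
    [SecondCountableTopology β] [MeasurableSpace β] [BorelSpace β] {f : α → β}
    (h : ∀ z, Measurable fun a => dist (f a) z) : Measurable f := by
  have hballs : IsTopologicalBasis {s : Set β | ∃ z r, s = Metric.ball z r} := by
    refine isTopologicalBasis_of_isOpen_of_nhds ?_ fun x u hxu hu => ?_
    · rintro s ⟨z, r, rfl⟩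
      exact Metric.isOpen_ball
    · obtain ⟨ε, hε, hball⟩ := Metric.isOpen_iff.1 hu x hxu
      exact ⟨Metric.ball x ε, ⟨x, ε, rfl⟩, Metric.mem_ball_self hε, hball⟩
  rw [BorelSpace.measurable_eq (α := β), hballs.borel_eq_generateFrom]
  refine measurable_generateFrom ?_
  rintro s ⟨z, r, rfl⟩
  exact measurableSet_lt (h z) measurable_const

theorem ContinuousMap.measurable_of_measurable_eval {α X E : Type*} [MeasurableSpace α]
    [TopologicalSpace X] [CompactSpace X] [T2Space X] [SecondCountableTopology X]
    [PseudoMetricSpace E] [SecondCountableTopology E] [MeasurableSpace E] [BorelSpace E]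
    [MeasurableSpace C(X, E)] [BorelSpace C(X, E)] {f : α → C(X, E)}
    (h : ∀ x, Measurable fun a => f a x) : Measurable f := by
  obtain ⟨D, hDc, hD⟩ := exists_countable_dense X
  have : Countable D := hDc.to_subtype
  refine measurable_of_measurable_dist_s3 fun z => ?_
  have hsup : (fun a => dist (f a) z) = fun a => ⨆ d : D, dist (f a d) (z d) := by
    ext a
    rw [ContinuousMap.dist_eq_iSup, hD.ciSup' ((f a).continuous.dist z.continuous)]
  rw [hsup]
  exact Measurable.iSup fun d => (h d).dist measurable_const

section UniformIntegrability

variable {ι α E F : Type*} {m : MeasurableSpace α} {μ : Measure α} {p : ℝ≥0∞}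
  [NormedAddCommGroup E] [NormedAddCommGroup F]

theorem MeasureTheory.UnifIntegrable.of_norm_le_mul_s3 {f : ι → α → E} {g : ι → α → F}
    {c : ℝ} (hf : UnifIntegrable f p μ) (hgf : ∀ i x, ‖g i x‖ ≤ c * ‖f i x‖) :
    UnifIntegrable g p μ := by
  intro ε hε
  obtain ⟨δ, hδ, hfδ⟩ := hf (ε := ε / (|c| + 1)) (by positivity)
  refine ⟨δ, hδ, fun i s hs hμs => ?_⟩
  have hind : ∀ x, ‖s.indicator (g i) x‖ ≤ |c| * ‖s.indicator (f i) x‖ := fun x => by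
    by_cases hx : x ∈ s
    · simpa [hx] using (hgf i x).trans (by gcongr; exact le_abs_self c)
    · simp [hx]
  calc eLpNorm (s.indicator (g i)) p μ
      ≤ ENNReal.ofReal |c| * eLpNorm (s.indicator (f i)) p μ :=
        eLpNorm_le_mul_eLpNorm_of_ae_le_mul (ae_of_all _ hind) p
    _ ≤ ENNReal.ofReal |c| * ENNReal.ofReal (ε / (|c| + 1)) := by
        gcongr
        exact hfδ i s hs hμs
    _ ≤ ENNReal.ofReal ε := by
        rw [← ENNReal.ofReal_mul (abs_nonneg c)]
        refine ENNReal.ofReal_le_ofReal ?_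
        rw [mul_div_assoc', div_le_iff₀ (by positivity)]
        nlinarith [abs_nonneg c]

theorem MeasureTheory.UnifIntegrable.of_norm_le_mul_one_add_norm [IsFiniteMeasure μ]
    (hp : 1 ≤ p) (hp' : p ≠ ∞) {f : ι → α → E} {g : ι → α → F} {c : ℝ}
    (hf : UnifIntegrable f p μ) (hf_meas : ∀ i, AEStronglyMeasurable (f i) μ)
    (hgf : ∀ i x, ‖g i x‖ ≤ c * (1 + ‖f i x‖)) :
    UnifIntegrable g p μ := by
  have hnorm : UnifIntegrable (fun i x => ‖f i x‖) p μ :=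
    hf.of_norm_le_mul_s3 (c := 1) fun i x => by simp
  have hsum : UnifIntegrable ((fun (_ : ι) (_ : α) => (1 : ℝ)) + fun i x => ‖f i x‖) p μ :=
    (unifIntegrable_const hp hp' (memLp_const 1)).add hnorm hp
      (fun _ => aestronglyMeasurable_const) fun i => (hf_meas i).norm
  refine hsum.of_norm_le_mul_s3 (c := c) fun i x => (hgf i x).trans_eq ?_
  simp [abs_of_nonneg (by positivity : 0 ≤ 1 + ‖f i x‖)]

end UniformIntegrability

theorem MeasureTheory.TendstoInMeasure.comp_continuous {α E F : Type*} {m : MeasurableSpace α}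
    {μ : Measure α} [IsFiniteMeasure μ] [PseudoMetricSpace E] [PseudoMetricSpace F] {f : E → F}
    (hf : Continuous f) {Y : ℕ → α → E} {Y₀ : α → E} (hY : TendstoInMeasure μ Y atTop Y₀)
    (hY_meas : ∀ n, AEStronglyMeasurable (Y n) μ) :
    TendstoInMeasure μ (fun n ω => f (Y n ω)) atTop fun ω => f (Y₀ ω) := by
  refine (exists_seq_tendstoInMeasure_atTop_iff
    fun n => hf.comp_aestronglyMeasurable (hY_meas n)).2 fun ns hns => ?_
  obtain ⟨ns', hns', hae⟩ := (hY.comp hns.tendsto_atTop).exists_seq_tendsto_ae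
  exact ⟨ns', hns', hae.mono fun ω hω => (hf.tendsto _).comp hω⟩

section Nemytskii

variable {α E F : Type*} {m : MeasurableSpace α} {μ : Measure α} [IsFiniteMeasure μ]
  {p : ℝ≥0∞} [NormedAddCommGroup E] [NormedAddCommGroup F] {c : ℝ}

theorem MeasureTheory.MemLp.comp_of_norm_le_mul_one_add_norm {f : E → F} (hf : Continuous f)
    (hfc : ∀ x, ‖f x‖ ≤ c * (1 + ‖x‖)) {Y : α → E} (hY : MemLp Y p μ) :
    MemLp (fun ω => f (Y ω)) p μ :=
  (((memLp_const (1 : ℝ)).add hY.norm).const_mul c).of_le (hf.comp_aestronglyMeasurable hY.1)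
    (ae_of_all _ fun ω => (hfc (Y ω)).trans (Real.le_norm_self _))

variable [Fact (1 ≤ p)] [Fact (p ≠ ∞)]

theorem MeasureTheory.Lp.continuous_comp_toLp {f : E → F} (hf : Continuous f)
    (hfc : ∀ x, ‖f x‖ ≤ c * (1 + ‖x‖)) :
    Continuous fun Y : Lp E p μ =>
      ((Lp.memLp Y).comp_of_norm_le_mul_one_add_norm hf hfc).toLp fun ω => f (Y ω) := by
  have hp : 1 ≤ p := Fact.out
  have hp' : p ≠ ∞ := Fact.out
  refine continuous_iff_seqContinuous.2 fun Y Y₀ hY => ?_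
  have hY_meas : ∀ n, AEStronglyMeasurable (Y n) μ := fun n => Lp.aestronglyMeasurable _
  refine (Lp.tendsto_Lp_iff_tendsto_eLpNorm'' _
    (fun n => (Lp.memLp (Y n)).comp_of_norm_le_mul_one_add_norm hf hfc) _ _).2 ?_
  refine tendsto_Lp_finite_of_tendstoInMeasure hp hp'
    (fun n => hf.comp_aestronglyMeasurable (hY_meas n))
    ((Lp.memLp Y₀).comp_of_norm_le_mul_one_add_norm hf hfc) ?_ ?_
  · exact (unifIntegrable_of_tendsto_Lp hp hp' (fun n => Lp.memLp _) (Lp.memLp _)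
      ((Lp.tendsto_Lp_iff_tendsto_eLpNorm' _ _).1 hY)).of_norm_le_mul_one_add_norm hp hp'
      hY_meas fun n ω => hfc _
  · exact (tendstoInMeasure_of_tendsto_Lp hY).comp_continuous hf hY_meas

variable {Λ : Type*} [MeasurableSpace Λ] [MeasureTheory.IsSeparable μ]
  [MeasurableSpace E] [BorelSpace E]
  [SeparableSpace F] [MeasurableSpace F] [BorelSpace F]
  [MeasurableSpace (Lp F p μ)] [BorelSpace (Lp F p μ)] {f : Λ → E → F}

theorem MeasureTheory.Lp.measurable_comp_toLp_const (hf : Measurable (uncurry f))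
    (hf_cont : ∀ l, Continuous (f l)) (hfc : ∀ l x, ‖f l x‖ ≤ c * (1 + ‖x‖))
    (Y : Lp E p μ) :
    Measurable fun l =>
      ((Lp.memLp Y).comp_of_norm_le_mul_one_add_norm (hf_cont l) (hfc l)).toLp
        fun ω => f l (Y ω) := by
  have hp0 : p ≠ 0 := (zero_lt_one.trans_le Fact.out).ne'
  refine measurable_of_measurable_dist_s3 fun Z => ?_
  have hdist : ∀ l, dist (((Lp.memLp Y).comp_of_norm_le_mul_one_add_norm (hf_cont l)
      (hfc l)).toLp fun ω => f l (Y ω)) Z =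
        (eLpNorm (fun ω => f l (Y ω) - Z ω) p μ).toReal := by
    intro l
    rw [Lp.dist_def]
    congr 1
    refine eLpNorm_congr_ae ?_
    filter_upwards [MemLp.coeFn_toLp ((Lp.memLp Y).comp_of_norm_le_mul_one_add_norm (hf_cont l)
      (hfc l))] with ω hω
    simp [hω]
  simp_rw [hdist, eLpNorm_eq_lintegral_rpow_enorm_toReal hp0 Fact.out]
  have hjoint : Measurable fun q : Λ × α => ‖f q.1 (Y q.2) - Z q.2‖ₑ :=
    ((hf.comp (measurable_fst.prodMk ((Lp.stronglyMeasurable Y).measurable.comp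
      measurable_snd))).sub ((Lp.stronglyMeasurable Z).measurable.comp measurable_snd)).enorm
  exact ENNReal.measurable_toReal.comp
    ((hjoint.pow_const _).lintegral_prod_right'.pow_const _)

theorem MeasureTheory.Lp.measurable_comp_toLp [SeparableSpace E]
    [MeasurableSpace (Lp E p μ)] [BorelSpace (Lp E p μ)] (hf : Measurable (uncurry f))
    (hf_cont : ∀ l, Continuous (f l)) (hfc : ∀ l x, ‖f l x‖ ≤ c * (1 + ‖x‖))
    {X : Λ → Lp E p μ} (hX : Measurable X) :
    Measurable fun l =>
      ((Lp.memLp (X l)).comp_of_norm_le_mul_one_add_norm (hf_cont l) (hfc l)).toLp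
        fun ω => f l (X l ω) :=
  (measurable_uncurry_of_continuous_of_measurable
    (u := fun (Y : Lp E p μ) l =>
      ((Lp.memLp Y).comp_of_norm_le_mul_one_add_norm (hf_cont l) (hfc l)).toLp
        fun ω => f l (Y ω))
    (fun l => Lp.continuous_comp_toLp (hf_cont l) (hfc l))
    (Lp.measurable_comp_toLp_const hf hf_cont hfc)).comp (hX.prodMk measurable_id)

end Nemytskii

section Volterra

variable {T C : ℝ}

noncomputable def primitiveOnIcc (T : ℝ) (f : ℝ → ℝ)
    (hf : ∀ a b, IntervalIntegrable f volume a b) : C(Icc (0 : ℝ) T, ℝ) :=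
  ⟨fun t => ∫ s in (0 : ℝ)..t, f s,
    (intervalIntegral.continuous_primitive hf 0).comp continuous_subtype_val⟩

theorem norm_primitiveOnIcc_le (hT : 0 ≤ T) {f : ℝ → ℝ}
    (hf : ∀ a b, IntervalIntegrable f volume a b) {M : ℝ} (hM : ∀ s, |f s| ≤ M) :
    ‖primitiveOnIcc T f hf‖ ≤ M * T := by
  have hM0 : 0 ≤ M := (abs_nonneg _).trans (hM 0)
  refine (ContinuousMap.norm_le _ (by positivity)).2 fun t => ?_
  calc ‖∫ s in (0 : ℝ)..t, f s‖ ≤ M * |(t : ℝ) - 0| :=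
        intervalIntegral.norm_integral_le_of_norm_le_const fun s _ => hM s
    _ ≤ M * T := by
        rw [sub_zero, abs_of_nonneg t.2.1]
        exact mul_le_mul_of_nonneg_left t.2.2 hM0

theorem dist_primitiveOnIcc_le (hT : 0 ≤ T) {f g : ℝ → ℝ}
    (hf : ∀ a b, IntervalIntegrable f volume a b)
    (hg : ∀ a b, IntervalIntegrable g volume a b) :
    dist (primitiveOnIcc T f hf) (primitiveOnIcc T g hg) ≤
      ∫ s in (0 : ℝ)..T, |f s - g s| := by
  have hfg : ∀ a b, IntervalIntegrable (fun s => |f s - g s|) volume a b :=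
    fun a b => ((hf a b).sub (hg a b)).abs
  refine (ContinuousMap.dist_le (intervalIntegral.integral_nonneg hT fun s _ => abs_nonneg _)).2
    fun t => ?_
  calc dist (∫ s in (0 : ℝ)..t, f s) (∫ s in (0 : ℝ)..t, g s)
      = |∫ s in (0 : ℝ)..t, (f s - g s)| := by
        rw [Real.dist_eq, intervalIntegral.integral_sub (hf 0 t) (hg 0 t)]
    _ ≤ ∫ s in (0 : ℝ)..t, |f s - g s| :=
        intervalIntegral.abs_integral_le_integral_abs t.2.1
    _ ≤ ∫ s in (0 : ℝ)..T, |f s - g s| :=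
        intervalIntegral.integral_mono_interval le_rfl t.2.1 t.2.2
          (ae_of_all _ fun s => abs_nonneg _) (hfg 0 T)

variable (hT : 0 ≤ T) {φ : Icc (0 : ℝ) T → ℝ → ℝ}

theorem abs_IccExtend_comp_le (hφC : ∀ t x, |φ t x| ≤ C * (1 + |x|))
    (g : C(Icc (0 : ℝ) T, ℝ)) (s : ℝ) :
    |IccExtend hT (fun t => φ t (g t)) s| ≤ C * (1 + ‖g‖) := by
  set t := projIcc 0 T hT s
  have hC : 0 ≤ C := by simpa using (abs_nonneg _).trans (hφC t 0)
  calc |φ t (g t)| ≤ C * (1 + |g t|) := hφC t (g t)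
    _ ≤ C * (1 + ‖g‖) := by gcongr; exact g.norm_coe_le_norm t

theorem measurable_IccExtend_comp (hφ : Measurable ↿φ) (g : C(Icc (0 : ℝ) T, ℝ)) :
    Measurable (IccExtend hT fun t => φ t (g t)) :=
  (hφ.comp (measurable_id.prodMk g.measurable)).comp continuous_projIcc.measurable

theorem intervalIntegrable_IccExtend_comp (hφ : Measurable ↿φ)
    (hφC : ∀ t x, |φ t x| ≤ C * (1 + |x|)) (g : C(Icc (0 : ℝ) T, ℝ)) (a b : ℝ) :
    IntervalIntegrable (IccExtend hT fun t => φ t (g t)) volume a b :=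
  (intervalIntegrable_const (c := C * (1 + ‖g‖))).mono_fun
    (measurable_IccExtend_comp hT hφ g).aestronglyMeasurable
    (ae_of_all _ fun s => (abs_IccExtend_comp_le hT hφC g s).trans (Real.le_norm_self _))

noncomputable def volterra (hφ : Measurable ↿φ) (hφC : ∀ t x, |φ t x| ≤ C * (1 + |x|))
    (g : C(Icc (0 : ℝ) T, ℝ)) : C(Icc (0 : ℝ) T, ℝ) :=
  primitiveOnIcc T (IccExtend hT fun t => φ t (g t))
    (intervalIntegrable_IccExtend_comp hT hφ hφC g)

variable (hφ : Measurable ↿φ) (hφC : ∀ t x, |φ t x| ≤ C * (1 + |x|))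

theorem norm_volterra_le (g : C(Icc (0 : ℝ) T, ℝ)) :
    ‖volterra hT hφ hφC g‖ ≤ C * T * (1 + ‖g‖) :=
  (norm_primitiveOnIcc_le hT _ (abs_IccExtend_comp_le hT hφC g)).trans_eq (by ring)

theorem continuous_volterra (hφ_cont : ∀ t, Continuous (φ t)) :
    Continuous (volterra hT hφ hφC) := by
  refine continuous_iff_continuousAt.2 fun g₀ => ?_
  set F := fun (g : C(Icc (0 : ℝ) T, ℝ)) s => IccExtend hT (fun t => φ t (g t)) s
  have hD : ContinuousAt (fun g => ∫ s in (0 : ℝ)..T, |F g s - F g₀ s|) g₀ := by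
    refine intervalIntegral.continuousAt_of_dominated_interval
      (bound := fun _ => C * (1 + (‖g₀‖ + 1)) + C * (1 + ‖g₀‖))
      (Eventually.of_forall fun g => ((measurable_IccExtend_comp hT hφ g).sub
        (measurable_IccExtend_comp hT hφ g₀)).abs.aestronglyMeasurable) ?_
      intervalIntegrable_const (ae_of_all _ fun s _ => ?_)
    · filter_upwards [Metric.ball_mem_nhds g₀ one_pos] with g hg
      refine ae_of_all _ fun s _ => ?_
      rw [Real.norm_eq_abs, abs_abs]
      refine (abs_sub _ _).trans (add_le_add ((abs_IccExtend_comp_le hT hφC g s).trans ?_)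
        (abs_IccExtend_comp_le hT hφC g₀ s))
      have hC : 0 ≤ C := by simpa using (abs_nonneg _).trans (hφC (projIcc 0 T hT s) 0)
      gcongr
      exact norm_le_norm_add_const_of_dist_le (Metric.mem_ball.1 hg).le
    · have : ContinuousAt (fun g : C(Icc (0 : ℝ) T, ℝ) => F g s) g₀ :=
        ((hφ_cont _).comp (continuous_eval_const _)).continuousAt
      exact (this.sub continuousAt_const).abs
  rw [ContinuousAt, tendsto_iff_dist_tendsto_zero]
  refine squeeze_zero (fun _ => dist_nonneg) (fun g => dist_primitiveOnIcc_le hT _ _) ?_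
  simpa [F] using hD.tendsto

theorem measurable_uncurry_volterra {Λ : Type*} [MeasurableSpace Λ]
    [MeasurableSpace C(Icc (0 : ℝ) T, ℝ)] [BorelSpace C(Icc (0 : ℝ) T, ℝ)]
    {ψ : Λ → Icc (0 : ℝ) T → ℝ → ℝ} (hψ : Measurable ↿ψ)
    (hψC : ∀ l t x, |ψ l t x| ≤ C * (1 + |x|)) :
    Measurable ↿fun l => volterra hT (hψ.comp measurable_prodMk_left) (hψC l) := by
  refine ContinuousMap.measurable_of_measurable_eval fun t => ?_
  have hproj : Measurable fun q : (Λ × C(Icc (0 : ℝ) T, ℝ)) × ℝ => projIcc 0 T hT q.2 :=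
    continuous_projIcc.measurable.comp measurable_snd
  have heval :
      Measurable fun q : (Λ × C(Icc (0 : ℝ) T, ℝ)) × ℝ => q.1.2 (projIcc 0 T hT q.2) :=
    continuous_eval.measurable.comp (measurable_fst.snd.prodMk hproj)
  have hint : StronglyMeasurable fun q : (Λ × C(Icc (0 : ℝ) T, ℝ)) × ℝ =>
      IccExtend hT (fun t => ψ q.1.1 t (q.1.2 t)) q.2 :=
    (hψ.comp (measurable_fst.fst.prodMk (hproj.prodMk heval))).stronglyMeasurable
  have := (hint.integral_prod_right' (ν := volume.restrict (Ioc 0 (t : ℝ)))).measurable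
  convert this using 1
  ext q
  exact intervalIntegral.integral_of_le t.2.1

theorem measurable_integral_comp_Lp_general
    {Ω : Type*} [TopologicalSpace Ω] [PolishSpace Ω] [MeasurableSpace Ω] [BorelSpace Ω]
    (P : Measure Ω) [IsProbabilityMeasure P]
    {T : ℝ} (hT : 0 < T)
    {p : ℝ≥0∞} [Fact (1 ≤ p)] (hp2 : p ≠ ⊤)
    (ψ : Set.Icc (0:ℝ) 1 → Set.Icc (0:ℝ) T → ℝ → ℝ)
    (hψmeas : Measurable fun q : Set.Icc (0:ℝ) 1 × Set.Icc (0:ℝ) T × ℝ =>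
      ψ q.1 q.2.1 q.2.2)
    (hψcont : ∀ (l : Set.Icc (0:ℝ) 1) (t : Set.Icc (0:ℝ) T),
      Continuous fun x : ℝ => ψ l t x)
    (C : ℝ)
    (hgrowth : ∀ (l : Set.Icc (0:ℝ) 1) (t : Set.Icc (0:ℝ) T) (x : ℝ),
      |ψ l t x| ≤ C * (1 + |x|))
    (X : Set.Icc (0:ℝ) 1 → Lp C(Set.Icc (0:ℝ) T, ℝ) p P)
    (hX : @Measurable (Set.Icc (0:ℝ) 1) (Lp C(Set.Icc (0:ℝ) T, ℝ) p P) _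
      (borel (Lp C(Set.Icc (0:ℝ) T, ℝ) p P)) X) :
    ∃ (hcont : ∀ (l : Set.Icc (0:ℝ) 1) (ω : Ω),
        Continuous fun t : Set.Icc (0:ℝ) T =>
          ∫ s in (0:ℝ)..(t:ℝ),
            ψ l (Set.projIcc 0 T hT.le s) (X l ω (Set.projIcc 0 T hT.le s)))
      (hmem : ∀ l : Set.Icc (0:ℝ) 1,
        MemLp (fun ω : Ω => ContinuousMap.mk
          (fun t : Set.Icc (0:ℝ) T =>
            ∫ s in (0:ℝ)..(t:ℝ),
              ψ l (Set.projIcc 0 T hT.le s) (X l ω (Set.projIcc 0 T hT.le s)))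
          (hcont l ω)) p P),
      @Measurable (Set.Icc (0:ℝ) 1) (Lp C(Set.Icc (0:ℝ) T, ℝ) p P) _
        (borel (Lp C(Set.Icc (0:ℝ) T, ℝ) p P))
        (fun l : Set.Icc (0:ℝ) 1 => (hmem l).toLp
          (fun ω : Ω => ContinuousMap.mk
            (fun t : Set.Icc (0:ℝ) T =>
              ∫ s in (0:ℝ)..(t:ℝ),
                ψ l (Set.projIcc 0 T hT.le s) (X l ω (Set.projIcc 0 T hT.le s)))
            (hcont l ω))) := by
  have : Fact (p ≠ ∞) := ⟨hp2⟩
  let : MeasurableSpace C(Icc (0 : ℝ) T, ℝ) := borel _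
  have : BorelSpace C(Icc (0 : ℝ) T, ℝ) := ⟨rfl⟩
  let : MeasurableSpace (Lp C(Icc (0 : ℝ) T, ℝ) p P) := borel _
  have : BorelSpace (Lp C(Icc (0 : ℝ) T, ℝ) p P) := ⟨rfl⟩
  have hψ : Measurable ↿ψ := hψmeas
  have hψ_slice : ∀ l, Measurable ↿(ψ l) := fun l => hψ.comp measurable_prodMk_left
  have hV_cont : ∀ l, Continuous (volterra hT.le (hψ_slice l) (hgrowth l)) :=
    fun l => continuous_volterra hT.le _ _ (hψcont l)
  have hV_growth := fun l => norm_volterra_le hT.le (hψ_slice l) (hgrowth l)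
  -- `volterra hT.le (hψ_slice l) (hgrowth l) g` is definitionally the `ContinuousMap.mk` above.
  exact ⟨fun l ω => (volterra hT.le (hψ_slice l) (hgrowth l) (X l ω)).continuous,
    fun l => (Lp.memLp (X l)).comp_of_norm_le_mul_one_add_norm (hV_cont l) (hV_growth l),
    Lp.measurable_comp_toLp (measurable_uncurry_volterra hT.le hψ hgrowth) hV_cont hV_growth hX⟩

/-- Let `Ω` be Polish with a Borel probability measure `P`, `T > 0`,
`1 ≤ p < ∞`. Suppose `ψ : [0,1] × [0,T] × ℝ → ℝ` is jointly measurable, continuous in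
the last variable, and of uniform linear growth. Then for any Borel-measurable map
`X : [0,1] → L^p(Ω; C([0,T];ℝ))`, for each `λ` the function
`ω ↦ (t ↦ ∫_0^t ψ(λ, s, X(λ)(ω)(s)) ds)` defines an element of
`L^p(Ω; C([0,T];ℝ))`, and the resulting map `[0,1] → L^p(Ω; C([0,T];ℝ))` is
measurable. -/
theorem measurable_integral_comp_Lp
    {Ω : Type*} [TopologicalSpace Ω] [PolishSpace Ω] [MeasurableSpace Ω] [BorelSpace Ω]
    (P : Measure Ω) [IsProbabilityMeasure P]
    {T : ℝ} (hT : 0 < T)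
    {p : ℝ≥0∞} [Fact (1 ≤ p)] (hp2 : p ≠ ⊤)
    (ψ : Set.Icc (0:ℝ) 1 → Set.Icc (0:ℝ) T → ℝ → ℝ)
    (hψmeas : Measurable fun q : Set.Icc (0:ℝ) 1 × Set.Icc (0:ℝ) T × ℝ =>
      ψ q.1 q.2.1 q.2.2)
    (hψcont : ∀ (l : Set.Icc (0:ℝ) 1) (t : Set.Icc (0:ℝ) T),
      Continuous fun x : ℝ => ψ l t x)
    (C : ℝ) (hC : 0 < C)
    (hgrowth : ∀ (l : Set.Icc (0:ℝ) 1) (t : Set.Icc (0:ℝ) T) (x : ℝ),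
      |ψ l t x| ≤ C * (1 + |x|))
    (X : Set.Icc (0:ℝ) 1 → Lp C(Set.Icc (0:ℝ) T, ℝ) p P)
    (hX : @Measurable (Set.Icc (0:ℝ) 1) (Lp C(Set.Icc (0:ℝ) T, ℝ) p P) _
      (borel (Lp C(Set.Icc (0:ℝ) T, ℝ) p P)) X) :
    ∃ (hcont : ∀ (l : Set.Icc (0:ℝ) 1) (ω : Ω),
        Continuous fun t : Set.Icc (0:ℝ) T =>
          ∫ s in (0:ℝ)..(t:ℝ),
            ψ l (Set.projIcc 0 T hT.le s) (X l ω (Set.projIcc 0 T hT.le s)))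
      (hmem : ∀ l : Set.Icc (0:ℝ) 1,
        MemLp (fun ω : Ω => ContinuousMap.mk
          (fun t : Set.Icc (0:ℝ) T =>
            ∫ s in (0:ℝ)..(t:ℝ),
              ψ l (Set.projIcc 0 T hT.le s) (X l ω (Set.projIcc 0 T hT.le s)))
          (hcont l ω)) p P),
      @Measurable (Set.Icc (0:ℝ) 1) (Lp C(Set.Icc (0:ℝ) T, ℝ) p P) _
        (borel (Lp C(Set.Icc (0:ℝ) T, ℝ) p P))
        (fun l : Set.Icc (0:ℝ) 1 => (hmem l).toLp
          (fun ω : Ω => ContinuousMap.mk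
            (fun t : Set.Icc (0:ℝ) T =>
              ∫ s in (0:ℝ)..(t:ℝ),
                ψ l (Set.projIcc 0 T hT.le s) (X l ω (Set.projIcc 0 T hT.le s)))
            (hcont l ω))) :=
  measurable_integral_comp_Lp_general P hT hp2 ψ hψmeas hψcont C hgrowth X hX
end Volterra
end
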